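/- arXiv:2109.04567 — 3 statements merged into one kernel-verified Lean document; each statement's English description precedes it below -/
import Mathlib

section
/- The set of tight cycles of a connected undirected graph G with non-negative edge weights spans the cycle space of G; in particular, the matrix whose columns are the incidence vectors of the tight cycles of G has rank ν, the dimension of the cycle space. -/
open scoped Classical

noncomputable section

namespace PaperMCB

variable {V : Type*} [Fintype V] [DecidableEq V]

/-- The boundary map sending a `ℤ₂`-chain of edges to the `ℤ₂`-chain of vertices
recording the parity of the degree of each vertex in the chain. -/
def boundaryMap (G : SimpleGraph V) :
    (G.edgeSet → ZMod 2) →ₗ[ZMod 2] (V → ZMod 2) :=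
  Matrix.mulVecLin (Matrix.of fun (v : V) (e : G.edgeSet) =>
    if v ∈ (e : Sym2 V) then (1 : ZMod 2) else 0)

/-- The cycle space of a graph over `ℤ₂`: chains of edges in which every vertex
has even degree. -/
def cycleSpace (G : SimpleGraph V) : Submodule (ZMod 2) (G.edgeSet → ZMod 2) :=
  LinearMap.ker (boundaryMap G)

/-- The weight of a cycle: the sum of the weights of its edges. -/
def cycleWeight (G : SimpleGraph V) (w : Sym2 V → ℝ) (c : G.edgeSet → ZMod 2) : ℝ :=
  ∑ e : G.edgeSet, if c e = 1 then w (e : Sym2 V) else 0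

/-- The weight of a set of cycles: the sum of the weights of its elements. -/
def setWeight (G : SimpleGraph V) (w : Sym2 V → ℝ) (B : Finset (G.edgeSet → ZMod 2)) : ℝ :=
  ∑ c ∈ B, cycleWeight G w c

/-- A set of cycles is a cycle basis if it is linearly independent and spans the
cycle space. -/
def IsCycleBasis (G : SimpleGraph V) (B : Finset (G.edgeSet → ZMod 2)) : Prop :=
  LinearIndependent (ZMod 2)
    (fun c : (B : Set (G.edgeSet → ZMod 2)) => (c : G.edgeSet → ZMod 2)) ∧
  Submodule.span (ZMod 2) (B : Set (G.edgeSet → ZMod 2)) = cycleSpace G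

/-- A minimum cycle basis is a cycle basis of minimum total weight. -/
def IsMinCycleBasis (G : SimpleGraph V) (w : Sym2 V → ℝ)
    (B : Finset (G.edgeSet → ZMod 2)) : Prop :=
  IsCycleBasis G B ∧
  ∀ B' : Finset (G.edgeSet → ZMod 2), IsCycleBasis G B' →
    setWeight G w B ≤ setWeight G w B'

/-- The `ℤ₂` incidence vector of (the edge set of) a walk. -/
def walkChain (G : SimpleGraph V) {u v : V} (W : G.Walk u v) : G.edgeSet → ZMod 2 :=
  fun e => if (e : Sym2 V) ∈ W.edges then 1 else 0

/-- The weight of a walk: the sum of the weights of its edges. -/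
def walkWeight (w : Sym2 V → ℝ) {G : SimpleGraph V} {u v : V} (W : G.Walk u v) : ℝ :=
  (W.edges.map w).sum

/-- An elementary cycle: the incidence vector of the edge set of a closed walk that is
a graph cycle (connected, all degrees two). -/
def IsElementaryCycle (G : SimpleGraph V) (c : G.edgeSet → ZMod 2) : Prop :=
  ∃ (u : V) (W : G.Walk u u), W.IsCycle ∧ walkChain G W = c

/-- A tight (isometric) cycle: an elementary cycle containing a shortest path between
every pair of its vertices. -/
def IsTight (G : SimpleGraph V) (w : Sym2 V → ℝ) (c : G.edgeSet → ZMod 2) : Prop :=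
  ∃ (u : V) (W : G.Walk u u), W.IsCycle ∧ walkChain G W = c ∧
    ∀ x y : V, x ∈ W.support → y ∈ W.support →
      ∃ P : G.Walk x y, (∀ e ∈ P.edges, e ∈ W.edges) ∧
        ∀ Q : G.Walk x y, walkWeight w P ≤ walkWeight w Q

end PaperMCB

/-!
Tight cycles are closed trails, so they lie in the cycle space. Conversely, suppose some element
of the cycle space is not a sum of tight cycles, and take such a `c` minimising its weight and
then its support size. Since `c ≠ 0` has even degrees everywhere, its support contains an
elementary cycle `C`. If `C ≠ c`, then `c = C + (c + C)` where both summands have no larger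
weight and strictly smaller support. If `C = c`, then `C` is not tight: some `x, y` on `C` have a
shortest path `P` lighter than both arcs `A₁, A₂` of `C` from `x` to `y`, and
`c = (A₁ + P) + (A₂ + P)` with both summands lighter than `c`. Either way minimality fails.
-/

namespace Submodule

theorem le_span_of_forall_exists_add_eq {R M α : Type*} [Semiring R] [AddCommMonoid M]
    [Module R M] [Finite M] [LinearOrder α] {N : Submodule R M} {S : Set M} (μ : M → α)
    (h : ∀ c ∈ N, c ∉ S → c ≠ 0 →
      ∃ a ∈ N, ∃ b ∈ N, μ a < μ c ∧ μ b < μ c ∧ a + b = c) :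
    N ≤ span R S := by
  by_contra hle
  obtain ⟨c, ⟨hcN, hcS⟩, hmin⟩ := Set.exists_min_image {c | c ∈ N ∧ c ∉ span R S} μ
    (Set.toFinite _) (Set.not_subset.mp hle)
  have hc0 : c ≠ 0 := by rintro rfl; exact hcS (zero_mem _)
  obtain ⟨a, ha, b, hb, hac, hbc, rfl⟩ := h c hcN (fun h => hcS (subset_span h)) hc0
  have hsmall : ∀ d ∈ N, μ d < μ (a + b) → d ∈ span R S := fun d hd hlt =>
    by_contra fun hdS => (hmin d ⟨hd, hdS⟩).not_gt hlt
  exact hcS (add_mem (hsmall a ha hac) (hsmall b hb hbc))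

end Submodule

namespace SimpleGraph

variable {V : Type*} {G : SimpleGraph V}

theorem not_isAcyclic_of_even_degree [Fintype V] [DecidableRel G.Adj]
    (hne : G.edgeSet.Nonempty) (heven : ∀ v, Even (G.degree v)) : ¬ G.IsAcyclic := by
  intro hacyc
  obtain ⟨e, he⟩ := hne
  induction e using Sym2.ind with | _ a b => ?_
  have hab : G.Adj a b := he
  have : Nonempty (Σ u v, G.Path u v) := ⟨⟨a, a, Path.nil⟩⟩
  obtain ⟨⟨u, v, p⟩, hmax⟩ := Finite.exists_max fun t : Σ u v, G.Path u v => t.2.2.1.length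
  have hp : ¬ p.1.Nil := fun hnil => by
    simpa [hnil.length_eq_zero] using hmax ⟨a, b, Path.singleton hab⟩
  have hdeg : 1 < G.degree v := by
    have : 0 < G.degree v :=
      G.degree_pos_iff_exists_adj v |>.mpr ⟨_, (p.1.adj_penultimate hp).symm⟩
    obtain ⟨k, hk⟩ := heven v
    omega
  obtain ⟨x, hx, hxne⟩ := Finset.exists_mem_ne hdeg p.1.penultimate
  have hvx : G.Adj v x := (G.mem_neighborFinset v x).mp hx
  have hxp : x ∉ p.1.support := fun h => hxne (hacyc.eq_penultimate_of_adj_end p.2 hvx h)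
  simpa using hmax ⟨u, x, ⟨_, p.2.concat hxp hvx⟩⟩

end SimpleGraph

namespace PaperMCB

open SimpleGraph

section Walk

variable {V : Type*} {G : SimpleGraph V} {w : Sym2 V → ℝ} {u v x : V}

lemma walkWeight_append (p : G.Walk u v) (q : G.Walk v x) :
    walkWeight w (p.append q) = walkWeight w p + walkWeight w q := by
  simp [walkWeight]

lemma walkWeight_reverse (p : G.Walk u v) : walkWeight w p.reverse = walkWeight w p := by
  simp [walkWeight, List.sum_reverse]

lemma walkWeight_bypass_le [DecidableEq V] (hw : ∀ e, 0 ≤ w e) (p : G.Walk u v) :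
    walkWeight w p.bypass ≤ walkWeight w p :=
  (p.edges_bypass_sublist_edges.map w).sum_le_sum (by simpa using fun e _ => hw e)

lemma exists_isPath_forall_walkWeight_le [Finite V] (hw : ∀ e, 0 ≤ w e) (h : G.Reachable u v) :
    ∃ P : G.Walk u v, P.IsPath ∧ ∀ Q : G.Walk u v, walkWeight w P ≤ walkWeight w Q := by
  have : Nonempty (G.Path u v) := ⟨h.some.toPath⟩
  have := Fintype.ofFinite V
  obtain ⟨P, hP⟩ := Finite.exists_min fun P : G.Path u v => walkWeight w P.1
  exact ⟨P.1, P.2, fun Q => (hP Q.toPath).trans (walkWeight_bypass_le hw Q)⟩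

end Walk

lemma range_col_of_subtype {ι R : Type*} (p : (ι → R) → Prop) :
    Set.range (Matrix.of fun (i : ι) (c : {c : ι → R // p c}) => (c : ι → R) i).col =
      {c | p c} :=
  Subtype.range_coe_subtype

section ZModTwo

variable {ι : Type*}

lemma support_add_of_support_subset {c d : ι → ZMod 2} (h : d.support ⊆ c.support) :
    (c + d).support = c.support \ d.support := by
  ext e
  have hde := @h e
  simp only [Function.mem_support, Set.mem_sdiff, Pi.add_apply] at hde ⊢
  revert hde
  generalize c e = a
  generalize d e = b
  revert a b
  decide

lemma support_ssubset_of_support_subset {c d : ι → ZMod 2} (hd : d.support ⊆ c.support)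
    (hd0 : d ≠ 0) (hdc : d ≠ c) :
    d.support ⊂ c.support ∧ (c + d).support ⊂ c.support := by
  rw [support_add_of_support_subset hd, Set.sdiff_ssubset_left_iff]
  refine ⟨hd.ssubset_of_ne fun heq => hdc ?_, ?_⟩
  · have hcd : c + d = 0 := by
      rw [← Function.support_eq_empty_iff, support_add_of_support_subset hd, heq, Set.sdiff_self]
    exact (sub_eq_zero.mp ((ZModModule.sub_eq_add c d).trans hcd)).symm
  · obtain ⟨e, he⟩ := Function.ne_iff.mp hd0
    exact ⟨e, hd he, he⟩

end ZModTwo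

section Chain

variable {V : Type*} [DecidableEq V] {G : SimpleGraph V} {u v x y : V}

lemma mem_support_walkChain {p : G.Walk u v} {e : G.edgeSet} :
    e ∈ (walkChain G p).support ↔ (e : Sym2 V) ∈ p.edges := by
  by_cases h : (e : Sym2 V) ∈ p.edges <;> simp [walkChain, h]

lemma walkChain_congr {p : G.Walk u v} {q : G.Walk x y}
    (h : ∀ e, e ∈ p.edges ↔ e ∈ q.edges) :
    walkChain G p = walkChain G q := by
  funext e
  simp [walkChain, h]

lemma walkChain_reverse (p : G.Walk u v) : walkChain G p.reverse = walkChain G p :=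
  walkChain_congr (by simp)

@[simp]
lemma walkChain_nil : walkChain G (Walk.nil : G.Walk u u) = 0 := by
  funext e
  simp [walkChain]

lemma walkChain_append {p : G.Walk u v} {q : G.Walk v x} (h : (p.append q).IsTrail) :
    walkChain G (p.append q) = walkChain G p + walkChain G q := by
  have hdisj := (List.nodup_append.mp (by simpa using h.edges_nodup)).2.2
  funext e
  by_cases hp : (e : Sym2 V) ∈ p.edges
  · have hq : (e : Sym2 V) ∉ q.edges := fun hq => hdisj _ hp _ hq rfl
    simp [walkChain, hp, hq]
  · by_cases hq : (e : Sym2 V) ∈ q.edges <;> simp [walkChain, hp, hq]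

lemma walkChain_ne_zero {W : G.Walk u u} (hW : W.IsCycle) : walkChain G W ≠ 0 := by
  obtain ⟨e, he⟩ := List.exists_mem_of_ne_nil W.edges (by simpa using hW.ne_nil)
  intro h0
  simpa [walkChain, he] using congrFun h0 ⟨e, W.edges_subset_edgeSet he⟩

lemma exists_append_reverse_edges_perm {W : G.Walk u u} (hx : x ∈ W.support)
    (hy : y ∈ W.support) :
    ∃ A₁ A₂ : G.Walk x y, (A₁.append A₂.reverse).edges.Perm W.edges := by
  have hy' : y ∈ (W.rotate x hx).support := (W.mem_support_rotate_iff x hx).mpr hy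
  refine ⟨(W.rotate x hx).takeUntil y hy', ((W.rotate x hx).dropUntil y hy').reverse, ?_⟩
  rw [Walk.reverse_reverse, Walk.take_spec]
  exact (W.rotate_edges x hx).perm

end Chain

section Weight

variable {V : Type*} [Fintype V] {G : SimpleGraph V} {w : Sym2 V → ℝ}

lemma cycleWeight_mono (hw : ∀ e, 0 ≤ w e) {c d : G.edgeSet → ZMod 2}
    (h : c.support ⊆ d.support) : cycleWeight G w c ≤ cycleWeight G w d := by
  refine Finset.sum_le_sum fun e _ => ?_
  have key : ∀ a b : ZMod 2, (a ≠ 0 → b ≠ 0) → a = 1 → b = 1 := by decide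
  have hcd := key (c e) (d e) (@h e)
  have := hw e
  split_ifs <;> simp_all

lemma cycleWeight_add_le (hw : ∀ e, 0 ≤ w e) (c d : G.edgeSet → ZMod 2) :
    cycleWeight G w (c + d) ≤ cycleWeight G w c + cycleWeight G w d := by
  rw [cycleWeight, cycleWeight, cycleWeight, ← Finset.sum_add_distrib]
  refine Finset.sum_le_sum fun e _ => ?_
  have key : ∀ a b : ZMod 2, a + b = 1 → a = 1 ∨ b = 1 := by decide
  have hcd := key (c e) (d e)
  have := hw e
  simp only [Pi.add_apply]
  split_ifs <;> simp_all

/-- The support size breaks ties because, with zero-weight edges, removing edges need not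
decrease the weight. -/
def cycleMeasure (G : SimpleGraph V) (w : Sym2 V → ℝ) (c : G.edgeSet → ZMod 2) :
    ℝ ×ₗ ℕ :=
  toLex (cycleWeight G w c, c.support.ncard)

lemma cycleMeasure_lt_of_cycleWeight_lt {c d : G.edgeSet → ZMod 2}
    (h : cycleWeight G w c < cycleWeight G w d) : cycleMeasure G w c < cycleMeasure G w d :=
  Prod.Lex.toLex_lt_toLex.mpr (Or.inl h)

lemma cycleMeasure_lt_of_support_ssubset (hw : ∀ e, 0 ≤ w e) {c d : G.edgeSet → ZMod 2}
    (h : c.support ⊂ d.support) : cycleMeasure G w c < cycleMeasure G w d :=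
  Prod.Lex.toLex_strictMono (Prod.mk_lt_mk_of_le_of_lt (cycleWeight_mono hw h.subset)
    (Set.ncard_lt_ncard h))

end Weight

section CycleSpace

variable {V : Type*} [Fintype V] [DecidableEq V] {G : SimpleGraph V} {w : Sym2 V → ℝ}
  {u v x y : V}

lemma sum_edgeSet_ite_mem {M : Type*} [AddCommMonoid M] (s : Finset (Sym2 V))
    (hs : ↑s ⊆ G.edgeSet) (f : Sym2 V → M) :
    ∑ e : G.edgeSet, (if (e : Sym2 V) ∈ s then f e else 0) = ∑ e ∈ s, f e := by
  have hsub : Finset.univ.filter (fun e : G.edgeSet => (e : Sym2 V) ∈ s) =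
      s.subtype (· ∈ G.edgeSet) := by
    ext e
    simp
  rw [← Finset.sum_filter, hsub, Finset.sum_subtype_eq_sum_filter,
    Finset.filter_true_of_mem fun e he => hs he]

lemma boundaryMap_apply_of_eq_ite (s : Finset (Sym2 V)) (hs : ↑s ⊆ G.edgeSet)
    {c : G.edgeSet → ZMod 2} (hc : ∀ e, c e = if (e : Sym2 V) ∈ s then 1 else 0) (v : V) :
    boundaryMap G c v = (s.filter (v ∈ ·)).card := by
  simp only [boundaryMap, Matrix.mulVecLin_apply, Matrix.mulVec, dotProduct, Matrix.of_apply, hc,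
    mul_ite, mul_one, mul_zero]
  rw [sum_edgeSet_ite_mem s hs fun e => if v ∈ e then 1 else 0, Finset.natCast_card_filter]

lemma boundaryMap_walkChain {p : G.Walk u v} (hp : p.IsTrail) (x : V) :
    boundaryMap G (walkChain G p) x = p.edges.countP (x ∈ ·) := by
  rw [boundaryMap_apply_of_eq_ite p.edges.toFinset
    (fun e he => p.edges_subset_edgeSet (List.mem_toFinset.mp he)) (fun e => by simp [walkChain]),
    List.countP_eq_length_filter,
    ← List.toFinset_card_of_nodup (hp.edges_nodup.filter _), List.toFinset_filter]
  simp

lemma walkChain_add_walkChain_mem_cycleSpace {p q : G.Walk x y} (hp : p.IsTrail)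
    (hq : q.IsTrail) : walkChain G p + walkChain G q ∈ cycleSpace G := by
  rw [cycleSpace, LinearMap.mem_ker, map_add]
  funext z
  rw [Pi.add_apply, boundaryMap_walkChain hp, boundaryMap_walkChain hq, Pi.zero_apply,
    ← Nat.cast_add, ZMod.natCast_eq_zero_iff_even, Nat.even_add, hp.even_countP_edges_iff,
    hq.even_countP_edges_iff]

lemma walkChain_mem_cycleSpace {p : G.Walk u u} (hp : p.IsTrail) :
    walkChain G p ∈ cycleSpace G := by
  simpa using walkChain_add_walkChain_mem_cycleSpace hp .nil

lemma IsTight.mem_cycleSpace {c : G.edgeSet → ZMod 2} (hc : IsTight G w c) :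
    c ∈ cycleSpace G := by
  obtain ⟨_, W, hW, rfl, -⟩ := hc
  exact walkChain_mem_cycleSpace hW.isTrail

lemma exists_isCycle_support_walkChain_subset {c : G.edgeSet → ZMod 2} (hc : c ∈ cycleSpace G)
    (hc0 : c ≠ 0) :
    ∃ (u : V) (W : G.Walk u u), W.IsCycle ∧ (walkChain G W).support ⊆ c.support := by
  let H := fromEdgeSet (Subtype.val '' c.support)
  have hHG : H ≤ G := (G.fromEdgeSet_le).mpr fun e he => by
    obtain ⟨⟨e, he'⟩, -, rfl⟩ := he.1
    exact he'
  have hmemH : ∀ e : G.edgeSet, (e : Sym2 V) ∈ H.edgeSet ↔ c e ≠ 0 := fun e => by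
    simp [H, edgeSet_fromEdgeSet, G.not_isDiag_of_mem_edgeSet e.2]
  have heven : ∀ v, Even (H.degree v) := fun v => by
    have hzmod : ∀ z : ZMod 2, z = if z ≠ 0 then 1 else 0 := by decide
    rw [← card_incidenceFinset_eq_degree, incidenceFinset_eq_filter,
      ← ZMod.natCast_eq_zero_iff_even, ← boundaryMap_apply_of_eq_ite (c := c) H.edgeFinset
        (by simpa using edgeSet_mono hHG) (fun e => by rw [hzmod (c e)]; simp [hmemH])]
    exact congrFun hc v
  obtain ⟨e, he⟩ := Function.ne_iff.mp hc0
  obtain ⟨u, W, hW⟩ : ∃ u, ∃ W : H.Walk u u, W.IsCycle := by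
    simpa [IsAcyclic] using not_isAcyclic_of_even_degree ⟨e, (hmemH e).mpr he⟩ heven
  refine ⟨u, W.mapLe hHG, hW.mapLe hHG, fun e he => ?_⟩
  rw [mem_support_walkChain, Walk.edges_mapLe_eq_edges] at he
  exact (hmemH e).mp (W.edges_subset_edgeSet he)

lemma cycleWeight_walkChain {p : G.Walk u v} (hp : p.IsTrail) :
    cycleWeight G w (walkChain G p) = walkWeight w p := by
  have hite : ∀ e : G.edgeSet, (if walkChain G p e = 1 then w e else 0) =
      if (e : Sym2 V) ∈ p.edges.toFinset then w e else 0 := fun e => by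
    by_cases h : (e : Sym2 V) ∈ p.edges <;> simp [walkChain, h]
  rw [cycleWeight, Finset.sum_congr rfl fun e _ => hite e,
    sum_edgeSet_ite_mem _ (fun e he => p.edges_subset_edgeSet (List.mem_toFinset.mp he)),
    List.sum_toFinset w hp.edges_nodup, walkWeight]

lemma cycleWeight_walkChain_add_le (hw : ∀ e, 0 ≤ w e) {p q : G.Walk x y} (hp : p.IsTrail)
    (hq : q.IsTrail) :
    cycleWeight G w (walkChain G p + walkChain G q) ≤ walkWeight w p + walkWeight w q :=
  (cycleWeight_add_le hw _ _).trans_eq (by rw [cycleWeight_walkChain hp, cycleWeight_walkChain hq])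

lemma exists_add_eq_walkChain_of_shortcut (hw : ∀ e, 0 ≤ w e) {W : G.Walk u u}
    (hW : W.IsTrail)
    (hx : x ∈ W.support) (hy : y ∈ W.support)
    (hshort : ∀ P : G.Walk x y, (∀ e ∈ P.edges, e ∈ W.edges) →
      ∃ Q : G.Walk x y, walkWeight w Q < walkWeight w P) :
    ∃ a ∈ cycleSpace G, ∃ b ∈ cycleSpace G,
      cycleWeight G w a < cycleWeight G w (walkChain G W) ∧
      cycleWeight G w b < cycleWeight G w (walkChain G W) ∧ a + b = walkChain G W := by
  obtain ⟨A₁, A₂, hperm⟩ := exists_append_reverse_edges_perm hx hy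
  have hT : (A₁.append A₂.reverse).IsTrail := by
    rw [Walk.isTrail_def, hperm.nodup_iff]
    exact hW.edges_nodup
  have hA₁ : A₁.IsTrail := hT.of_append_left
  have hA₂ : A₂.IsTrail := by simpa using hT.of_append_right.reverse
  have hWT : walkChain G W = walkChain G A₁ + walkChain G A₂ := by
    rw [walkChain_congr fun e => hperm.mem_iff.symm, walkChain_append hT, walkChain_reverse]
  have hweight : cycleWeight G w (walkChain G W) = walkWeight w A₁ + walkWeight w A₂ := by
    rw [walkChain_congr fun e => hperm.mem_iff.symm, cycleWeight_walkChain hT, walkWeight_append,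
      walkWeight_reverse]
  obtain ⟨P, hP, hPmin⟩ := exists_isPath_forall_walkWeight_le hw ⟨A₁⟩
  have hlt₁ : walkWeight w P < walkWeight w A₁ := by
    obtain ⟨Q, hQ⟩ := hshort A₁ fun e he => hperm.subset (by simp [he])
    exact (hPmin Q).trans_lt hQ
  have hlt₂ : walkWeight w P < walkWeight w A₂ := by
    obtain ⟨Q, hQ⟩ := hshort A₂ fun e he => hperm.subset (by simp [he])
    exact (hPmin Q).trans_lt hQ
  refine ⟨_, walkChain_add_walkChain_mem_cycleSpace hA₁ hP.isTrail,
    _, walkChain_add_walkChain_mem_cycleSpace hA₂ hP.isTrail,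
    (cycleWeight_walkChain_add_le hw hA₁ hP.isTrail).trans_lt (by linarith),
    (cycleWeight_walkChain_add_le hw hA₂ hP.isTrail).trans_lt (by linarith), ?_⟩
  rw [hWT, add_add_add_comm, ZModModule.add_self, add_zero]

lemma cycleSpace_le_span_isTight (hw : ∀ e, 0 ≤ w e) :
    cycleSpace G ≤ Submodule.span (ZMod 2) {c | IsTight G w c} := by
  refine Submodule.le_span_of_forall_exists_add_eq (cycleMeasure G w) fun c hc hct hc0 => ?_
  obtain ⟨u, W, hW, hWc⟩ := exists_isCycle_support_walkChain_subset hc hc0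
  by_cases hWeq : walkChain G W = c
  · subst hWeq
    have hnot : ¬ ∀ x y : V, x ∈ W.support → y ∈ W.support →
        ∃ P : G.Walk x y, (∀ e ∈ P.edges, e ∈ W.edges) ∧
          ∀ Q : G.Walk x y, walkWeight w P ≤ walkWeight w Q :=
      fun h => hct ⟨u, W, hW, rfl, h⟩
    push Not at hnot
    obtain ⟨x, y, hx, hy, hshort⟩ := hnot
    obtain ⟨a, ha, b, hb, hac, hbc, hab⟩ :=
      exists_add_eq_walkChain_of_shortcut hw hW.isTrail hx hy hshort
    exact ⟨a, ha, b, hb, cycleMeasure_lt_of_cycleWeight_lt hac,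
      cycleMeasure_lt_of_cycleWeight_lt hbc, hab⟩
  · obtain ⟨hlt₁, hlt₂⟩ :=
      support_ssubset_of_support_subset hWc (walkChain_ne_zero hW) hWeq
    have hWC := walkChain_mem_cycleSpace hW.isTrail
    refine ⟨_, hWC, _, add_mem hc hWC, cycleMeasure_lt_of_support_ssubset hw hlt₁,
      cycleMeasure_lt_of_support_ssubset hw hlt₂, ?_⟩
    rw [add_left_comm, ZModModule.add_self, add_zero]

end CycleSpace

variable {V : Type*} [Fintype V] [DecidableEq V]

theorem tight_cycles_span_general (G : SimpleGraph V)
    (w : Sym2 V → ℝ) (hw : ∀ e, 0 ≤ w e) :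
    Submodule.span (ZMod 2) {c : G.edgeSet → ZMod 2 | IsTight G w c} = cycleSpace G ∧
    (Matrix.of fun (e : G.edgeSet) (c : {c : G.edgeSet → ZMod 2 // IsTight G w c}) =>
        (c : G.edgeSet → ZMod 2) e).rank
      = Module.finrank (ZMod 2) (cycleSpace G) := by
  have hspan : Submodule.span (ZMod 2) {c | IsTight G w c} = cycleSpace G :=
    le_antisymm (Submodule.span_le.mpr fun _ => IsTight.mem_cycleSpace)
      (cycleSpace_le_span_isTight hw)
  refine ⟨hspan, ?_⟩
  rw [Matrix.rank_eq_finrank_span_cols, range_col_of_subtype, hspan]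

/-- The tight cycles of a connected graph with non-negative edge weights span the cycle
space; in particular, the matrix whose columns are the incidence vectors of the tight
cycles has rank `ν`, the dimension of the cycle space. -/
theorem tight_cycles_span (G : SimpleGraph V) (hG : G.Connected)
    (w : Sym2 V → ℝ) (hw : ∀ e, 0 ≤ w e) :
    Submodule.span (ZMod 2) {c : G.edgeSet → ZMod 2 | IsTight G w c} = cycleSpace G ∧
    (Matrix.of fun (e : G.edgeSet) (c : {c : G.edgeSet → ZMod 2 // IsTight G w c}) =>
        (c : G.edgeSet → ZMod 2) e).rank
      = Module.finrank (ZMod 2) (cycleSpace G) :=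
  tight_cycles_span_general G w hw

end PaperMCB
end
end

section
/- Let K be a connected simplicial complex with non-negative edge weights, and let M = {B₁, …, B_q, C₁, …, C_p} be a minimum cycle basis of the 1-skeleton K₁, where B₁, …, B_q are the null-homologous elements and C₁, …, C_p are the non-bounding elements, each list sorted in non-decreasing order of weight. Then there exists a minimum homology basis {ζ₁, …, ζ_g} of K, indexed in non-decreasing order of weight, such that ζ₁ is homologous to C₁. -/
open scoped Classical

noncomputable section

namespace PaperMCB

variable {V : Type*} [Fintype V] [DecidableEq V]

/-- A (2-dimensional) simplicial complex, presented by its 1-skeleton `G`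
together with its set of triangular 2-simplices. -/
structure SComplex (V : Type*) [Fintype V] [DecidableEq V] where
  G : SimpleGraph V
  faces : Finset (Finset V)
  card_faces : ∀ f ∈ faces, f.card = 3
  adj_of_faces : ∀ f ∈ faces, ∀ x ∈ f, ∀ y ∈ f, x ≠ y → G.Adj x y

/-- The boundary of a 2-simplex: the `ℤ₂` incidence vector of its three edges. -/
def faceChain (K : SComplex V) (f : Finset V) : K.G.edgeSet → ZMod 2 :=
  fun e => if ∀ x ∈ (e : Sym2 V), x ∈ f then 1 else 0

/-- The boundary space `B₁(K) = im ∂₂`: the span of the boundaries of the 2-simplices. -/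
def boundarySpace (K : SComplex V) : Submodule (ZMod 2) (K.G.edgeSet → ZMod 2) :=
  Submodule.span (ZMod 2) (faceChain K '' (K.faces : Set (Finset V)))

/-- Two chains are homologous if their `ℤ₂`-difference is a boundary. -/
def Homologous (K : SComplex V) (z z' : K.G.edgeSet → ZMod 2) : Prop :=
  z - z' ∈ boundarySpace K

/-- The first homology group `H₁(K) = Z₁(K)/B₁(K)`, realized as the image of the
cycle space in the quotient by the boundary space. -/
def homologySpace (K : SComplex V) :
    Submodule (ZMod 2) ((K.G.edgeSet → ZMod 2) ⧸ boundarySpace K) :=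
  (cycleSpace K.G).map (boundarySpace K).mkQ

/-- A homology basis: a set of 1-cycles whose homology classes form a basis of `H₁(K)`. -/
def IsHomologyBasis (K : SComplex V) (H : Finset (K.G.edgeSet → ZMod 2)) : Prop :=
  (∀ z ∈ H, z ∈ cycleSpace K.G) ∧
  LinearIndependent (ZMod 2)
    (fun z : (H : Set (K.G.edgeSet → ZMod 2)) => (boundarySpace K).mkQ (z : K.G.edgeSet → ZMod 2)) ∧
  Submodule.span (ZMod 2)
      ((boundarySpace K).mkQ '' (H : Set (K.G.edgeSet → ZMod 2))) = homologySpace K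

/-- A minimum homology basis is a homology basis of minimum total weight. -/
def IsMinHomologyBasis (K : SComplex V) (w : Sym2 V → ℝ)
    (H : Finset (K.G.edgeSet → ZMod 2)) : Prop :=
  IsHomologyBasis K H ∧
  ∀ H' : Finset (K.G.edgeSet → ZMod 2), IsHomologyBasis K H' →
    setWeight K.G w H ≤ setWeight K.G w H'

/-!
A minimum cycle basis `M` obeys Horton's exchange bound: if a cycle `ζ` lies outside the span of
`M \ {x}` for some `x ∈ M`, then exchanging `x` for `ζ` gives another cycle basis, so
`w x ≤ w ζ`. For a non-bounding `ζ`, its expansion in `M` must use a non-bounding `x`, and such an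
`x` can be chosen with `ζ ∉ span (M \ {x})`; hence `C₁` is a lightest non-bounding cycle. The same
exchange, performed in `H₁`, puts `C₁` into any minimum homology basis in place of an element of
at least its weight; listing the result by weight with `C₁` first gives `ζ`.
-/

open Set Submodule

section LinearAlgebra

variable {K M ι : Type*} [Field K] [AddCommGroup M] [Module K M] {f : ι → M}

theorem _root_.LinearIndepOn.exists_notMem_span_image_diff {s : Set ι}
    (hs : LinearIndepOn K f s) {z : M} (hz : z ∈ span K (f '' s)) {P : Submodule K M}
    (hzP : z ∉ P) : ∃ x ∈ s, f x ∉ P ∧ z ∉ span K (f '' (s \ {x})) := by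
  obtain ⟨l, hl, rfl⟩ := (Finsupp.mem_span_image_iff_linearCombination K).mp hz
  obtain ⟨x, hx, hxP⟩ : ∃ x ∈ l.support, f x ∉ P := by
    by_contra! h
    exact hzP (Submodule.sum_mem _ fun x hx => P.smul_mem _ (h x hx))
  refine ⟨x, hl hx, hxP, fun hmem => ?_⟩
  obtain ⟨l', hl', hl'l⟩ := (Finsupp.mem_span_image_iff_linearCombination K).mp hmem
  -- the coefficient of `x` is nonzero in `l` but zero in `l'`, yet `l = l'`
  have hll' := linearIndepOn_iffₛ.mp hs l' (Finsupp.supported_mono sdiff_subset hl') l hl hl'l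
  have hx' : x ∉ l'.support := fun h => hl' h |>.2 rfl
  exact hx' (hll' ▸ hx)

theorem _root_.LinearIndepOn.exchange [DecidableEq ι] {s : Finset ι} (hs : LinearIndepOn K f s)
    {x z : ι} (hx : x ∈ s) (hz : f z ∈ span K (f '' s))
    (hzx : f z ∉ span K (f '' (s \ {x} : Set ι))) :
    LinearIndepOn K f ↑(insert z (s.erase x)) ∧
      span K (f '' ↑(insert z (s.erase x))) = span K (f '' s) := by
  rw [Finset.coe_insert, Finset.coe_erase]
  refine ⟨(hs.mono sdiff_subset).insert hzx, ?_⟩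
  rw [image_insert_eq]
  apply le_antisymm
  · rw [span_insert]
    exact sup_le ((span_singleton_le_iff_mem _ _).mpr hz) (span_mono (image_mono sdiff_subset))
  · rw [span_le]
    rintro _ ⟨y, hy, rfl⟩
    rcases eq_or_ne y x with rfl | hyx
    · have hz' : f z ∈ span K (insert (f y) (f '' (s \ {y} : Set ι))) := by
        rwa [← image_insert_eq, insert_sdiff_singleton, insert_eq_of_mem hy]
      exact mem_span_insert_exchange hz' hzx
    · exact subset_span (mem_insert_of_mem _ (mem_image_of_mem f ⟨hy, hyx⟩))

end LinearAlgebra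

theorem sum_insert_erase_add {α β : Type*} [DecidableEq α] [AddCommMonoid β] {s : Finset α}
    {x z : α} (hx : x ∈ s) (hz : z ∉ s.erase x) (ω : α → β) :
    ∑ a ∈ insert z (s.erase x), ω a + ω x = ∑ a ∈ s, ω a + ω z := by
  rw [Finset.sum_insert hz, ← Finset.add_sum_erase s ω hx]
  abel

theorem exists_monotone_enum {α : Type*} [DecidableEq α] {s : Finset α} (ω : α → ℝ) {a : α}
    (ha : a ∈ s) (hle : ∀ b ∈ s, ω a ≤ ω b) :
    ∃ (n : ℕ) (hn : 0 < n) (e : Fin n → α), Function.Injective e ∧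
      Finset.image e Finset.univ = s ∧ Monotone (ω ∘ e) ∧ e ⟨0, hn⟩ = a := by
  set l := (s.erase a).toList.mergeSort fun b c => decide (ω b ≤ ω c)
  have hperm : l.Perm (s.erase a).toList := List.mergeSort_perm _ _
  have hsort : l.Pairwise fun b c => ω b ≤ ω c := by
    simpa using List.pairwise_mergeSort (le := fun b c => decide (ω b ≤ ω c))
      (by simpa using fun _ _ _ => le_trans) (by simpa using fun b c => le_total (ω b) (ω c)) _
  set L := a :: l
  have hmem : ∀ b, b ∈ L ↔ b ∈ s := by
    intro b
    simp only [L, List.mem_cons, hperm.mem_iff, Finset.mem_toList, Finset.mem_erase]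
    grind
  have hnodup : L.Nodup :=
    List.nodup_cons.mpr ⟨by simp [hperm.mem_iff], hperm.nodup_iff.mpr (Finset.nodup_toList _)⟩
  have hLsort : L.Pairwise fun b c => ω b ≤ ω c :=
    List.pairwise_cons.mpr ⟨fun b hb => hle b ((hmem b).mp (List.mem_cons_of_mem a hb)), hsort⟩
  refine ⟨L.length, List.length_pos_of_mem List.mem_cons_self, L.get,
    List.nodup_iff_injective_get.mp hnodup, ?_, fun i j hij => hLsort.rel_get_of_le hij, rfl⟩
  ext b
  simp [← hmem b, List.mem_iff_get]

theorem IsMinCycleBasis.weight_le_of_exchange {G : SimpleGraph V} {w : Sym2 V → ℝ}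
    {S : Finset (G.edgeSet → ZMod 2)} (hS : IsMinCycleBasis G w S) {x z : G.edgeSet → ZMod 2}
    (hx : x ∈ S) (hz : z ∈ cycleSpace G) (hzx : z ∉ span (ZMod 2) (↑S \ {x})) :
    cycleWeight G w x ≤ cycleWeight G w z := by
  obtain ⟨⟨hind, hspan⟩, hmin⟩ := hS
  obtain ⟨hind', hspan'⟩ := LinearIndepOn.exchange (f := id) hind hx
    (by rwa [image_id, hspan]) (by rwa [image_id])
  rw [image_id, image_id, hspan] at hspan'
  have hle := hmin (insert z (S.erase x)) ⟨hind', hspan'⟩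
  have hexch := sum_insert_erase_add hx
    (fun h => hzx (subset_span (by rwa [← Finset.coe_erase]))) (cycleWeight G w)
  unfold setWeight at hle
  linarith

theorem IsMinCycleBasis.exists_le_of_notMem {G : SimpleGraph V} {w : Sym2 V → ℝ}
    {S : Finset (G.edgeSet → ZMod 2)} (hS : IsMinCycleBasis G w S)
    (P : Submodule (ZMod 2) (G.edgeSet → ZMod 2)) {ζ : G.edgeSet → ZMod 2}
    (hζ : ζ ∈ cycleSpace G) (hζP : ζ ∉ P) :
    ∃ x ∈ S, x ∉ P ∧ cycleWeight G w x ≤ cycleWeight G w ζ := by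
  obtain ⟨x, hxS, hxP, hζx⟩ := LinearIndepOn.exists_notMem_span_image_diff (f := id) hS.1.1
    (by rwa [image_id, hS.1.2]) hζP
  exact ⟨x, hxS, hxP, hS.weight_le_of_exchange hxS hζ (by simpa using hζx)⟩

section Homology

variable {K : SComplex V}

theorem IsHomologyBasis.notMem_boundarySpace {H : Finset (K.G.edgeSet → ZMod 2)}
    (hH : IsHomologyBasis K H) {z : K.G.edgeSet → ZMod 2} (hz : z ∈ H) :
    z ∉ boundarySpace K := fun hzB =>
  hH.2.1.ne_zero ⟨z, Finset.mem_coe.mpr hz⟩ ((Submodule.Quotient.mk_eq_zero _).mpr hzB)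

theorem IsHomologyBasis.exchange {H : Finset (K.G.edgeSet → ZMod 2)} (hH : IsHomologyBasis K H)
    {x z : K.G.edgeSet → ZMod 2} (hx : x ∈ H) (hz : z ∈ cycleSpace K.G)
    (hzx : (boundarySpace K).mkQ z ∉ span (ZMod 2) ((boundarySpace K).mkQ '' (↑H \ {x}))) :
    IsHomologyBasis K (insert z (H.erase x)) := by
  obtain ⟨hHZ, hind, hspan⟩ := hH
  obtain ⟨hind', hspan'⟩ := LinearIndepOn.exchange hind hx (hspan ▸ mem_map_of_mem hz) hzx
  refine ⟨fun y hy => ?_, hind', hspan'.trans hspan⟩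
  rcases Finset.mem_insert.mp hy with rfl | hy
  exacts [hz, hHZ y (Finset.mem_of_mem_erase hy)]

variable (K) in
theorem exists_isHomologyBasis : ∃ H, IsHomologyBasis K H := by
  obtain ⟨b, hbZ, -, hZb, hb⟩ := exists_linearIndepOn_extension (K := ZMod 2)
    (v := (boundarySpace K).mkQ) (linearIndepOn_empty _ _) (empty_subset (cycleSpace K.G : Set _))
  obtain ⟨H, rfl⟩ := (toFinite b).exists_finset_coe
  refine ⟨H, fun z hz => hbZ hz, hb, ?_⟩
  rw [homologySpace]
  apply le_antisymm
  · rw [span_le]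
    rintro _ ⟨y, hy, rfl⟩
    exact mem_map_of_mem (hbZ hy)
  · rintro _ ⟨y, hy, rfl⟩
    exact hZb (mem_image_of_mem _ hy)

theorem exists_isMinHomologyBasis (w : Sym2 V → ℝ) : ∃ H, IsMinHomologyBasis K w H :=
  Set.exists_min_image {H | IsHomologyBasis K H} (setWeight K.G w) (toFinite _)
    (exists_isHomologyBasis K)

theorem exists_isMinHomologyBasis_mem {w : Sym2 V → ℝ} {z : K.G.edgeSet → ZMod 2}
    (hz : z ∈ cycleSpace K.G) (hzB : z ∉ boundarySpace K)
    (hz_le : ∀ ζ ∈ cycleSpace K.G, ζ ∉ boundarySpace K →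
      cycleWeight K.G w z ≤ cycleWeight K.G w ζ) :
    ∃ H, IsMinHomologyBasis K w H ∧ z ∈ H := by
  obtain ⟨H, hH, hHmin⟩ := exists_isMinHomologyBasis (K := K) w
  have hzH : (boundarySpace K).mkQ z ∈ span (ZMod 2) ((boundarySpace K).mkQ '' H) := by
    rw [hH.2.2]
    exact mem_map_of_mem hz
  have hz0 : (boundarySpace K).mkQ z ∉ (⊥ : Submodule (ZMod 2) _) := by
    rwa [mem_bot, mkQ_apply, Submodule.Quotient.mk_eq_zero]
  obtain ⟨x, hx, -, hzx⟩ := LinearIndepOn.exists_notMem_span_image_diff hH.2.1 hzH hz0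
  have hzx' : z ∉ H.erase x := fun h =>
    hzx (subset_span (mem_image_of_mem _ (by rwa [← Finset.coe_erase])))
  have hexch := sum_insert_erase_add hx hzx' (cycleWeight K.G w)
  have hxz := hz_le x (hH.1 x hx) (hH.notMem_boundarySpace hx)
  refine ⟨insert z (H.erase x), ⟨hH.exchange hx hz hzx, fun H' hH' => ?_⟩,
    Finset.mem_insert_self _ _⟩
  have hle : setWeight K.G w (insert z (H.erase x)) ≤ setWeight K.G w H := by
    unfold setWeight
    linarith
  exact hle.trans (hHmin H' hH')

end Homology

theorem exists_min_hom_basis_first_homologous_general (K : SComplex V) (w : Sym2 V → ℝ)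
    {q p : ℕ} (B : Fin q → (K.G.edgeSet → ZMod 2)) (C : Fin p → (K.G.edgeSet → ZMod 2))
    (hMmin : IsMinCycleBasis K.G w (Finset.image (Sum.elim B C) Finset.univ))
    (hBnull : ∀ j, B j ∈ boundarySpace K)
    (hCnon : ∀ i, C i ∉ boundarySpace K)
    (hCsort : ∀ i j : Fin p, i ≤ j → cycleWeight K.G w (C i) ≤ cycleWeight K.G w (C j))
    (hp : 0 < p) :
    ∃ (g : ℕ) (hg : 0 < g) (ζ : Fin g → (K.G.edgeSet → ZMod 2)),
      Function.Injective ζ ∧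
      IsMinHomologyBasis K w (Finset.image ζ Finset.univ) ∧
      (∀ i j : Fin g, i ≤ j → cycleWeight K.G w (ζ i) ≤ cycleWeight K.G w (ζ j)) ∧
      Homologous K (ζ ⟨0, hg⟩) (C ⟨0, hp⟩) := by
  set c₀ := C ⟨0, hp⟩
  have hc₀ : c₀ ∈ cycleSpace K.G :=
    hMmin.1.2 ▸ subset_span (Finset.mem_image_of_mem _ (Finset.mem_univ (Sum.inr _)))
  have hc₀_le : ∀ ζ ∈ cycleSpace K.G, ζ ∉ boundarySpace K →
      cycleWeight K.G w c₀ ≤ cycleWeight K.G w ζ := by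
    intro ζ hζ hζB
    obtain ⟨x, hxM, hxB, hxζ⟩ := hMmin.exists_le_of_notMem (boundarySpace K) hζ hζB
    obtain ⟨j | i, -, rfl⟩ := Finset.mem_image.mp hxM
    · exact absurd (hBnull j) hxB
    · exact (hCsort _ i (Nat.zero_le _)).trans hxζ
  obtain ⟨H, hH, hc₀H⟩ := exists_isMinHomologyBasis_mem hc₀ (hCnon _) hc₀_le
  obtain ⟨g, hg, ζ, hζinj, rfl, hζmono, hζ₀⟩ := exists_monotone_enum (cycleWeight K.G w) hc₀H
    fun y hy => hc₀_le y (hH.1.1 y hy) (hH.1.notMem_boundarySpace hy)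
  refine ⟨g, hg, ζ, hζinj, hH, fun i j hij => hζmono hij, ?_⟩
  rw [Homologous, hζ₀, sub_self]
  exact zero_mem _

/-- Part 2 of Lemma 4: there exists a minimum homology basis whose first element is
homologous to the first non-bounding element of the minimum cycle basis. -/
theorem exists_min_hom_basis_first_homologous (K : SComplex V) (hK : K.G.Connected)
    (w : Sym2 V → ℝ) (hw : ∀ e, 0 ≤ w e)
    {q p : ℕ} (B : Fin q → (K.G.edgeSet → ZMod 2)) (C : Fin p → (K.G.edgeSet → ZMod 2))
    (hMinj : Function.Injective (Sum.elim B C))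
    (hMmin : IsMinCycleBasis K.G w (Finset.image (Sum.elim B C) Finset.univ))
    (hBnull : ∀ j, B j ∈ boundarySpace K)
    (hCnon : ∀ i, C i ∉ boundarySpace K)
    (hBsort : ∀ i j : Fin q, i ≤ j → cycleWeight K.G w (B i) ≤ cycleWeight K.G w (B j))
    (hCsort : ∀ i j : Fin p, i ≤ j → cycleWeight K.G w (C i) ≤ cycleWeight K.G w (C j))
    (hp : 0 < p) :
    ∃ (g : ℕ) (hg : 0 < g) (ζ : Fin g → (K.G.edgeSet → ZMod 2)),
      Function.Injective ζ ∧
      IsMinHomologyBasis K w (Finset.image ζ Finset.univ) ∧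
      (∀ i j : Fin g, i ≤ j → cycleWeight K.G w (ζ i) ≤ cycleWeight K.G w (ζ j)) ∧
      Homologous K (ζ ⟨0, hg⟩) (C ⟨0, hp⟩) :=
  exists_min_hom_basis_first_homologous_general K w B C hMmin hBnull hCnon hCsort hp

end PaperMCB
end
end

section
/- Let K be a connected simplicial complex with non-negative edge weights, and let M = {B₁, …, B_q, C₁, …, C_p} be a minimum cycle basis of the 1-skeleton K₁, where B₁, …, B_q are the null-homologous elements and C₁, …, C_p are the non-bounding elements, each list sorted in non-decreasing order of weight. Define indices greedily: i₁ = 1, and for k > 1, let i_k be the smallest index such that C_{i_k} is not homologous to any cycle in the span of {C_{i₁}, …, C_{i_{k−1}}}. Then the set {C_{i₁}, …, C_{i_g}} constitutes a minimum homology basis of K. -/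
open scoped Classical

noncomputable section

/-!
The greedy classes `[C_{i_k}]` are independent in `H₁`, each lying outside the span of the
earlier ones, and there are `g` of them, so they form a homology basis. For minimality let `W_k`
be the span of the first `k` greedy classes and let `z` be a cycle with `[z] ∉ W_k`. Expanding `z`
in the minimum cycle basis, some `C_i` with nonzero coefficient has `[C_i] ∉ W_k`, so `i_k ≤ i`
and `w(C_{i_k}) ≤ w(C_i) ≤ w(z)`; the last inequality holds because exchanging `C_i` for `z`
yields another cycle basis. Hence at most `k` elements of any homology basis weigh less than
`C_{i_k}` (their classes are independent and lie in `W_k`), i.e. its `k`-th lightest element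
weighs at least `w(C_{i_k})`.
-/

open Submodule Function

theorem Finset.sum_le_sum_of_card_filter_lt_le {α β : Type*} [LinearOrder β] [AddCommMonoid β]
    [IsOrderedAddMonoid β] {n : ℕ} {s : Finset α} (hs : s.card = n) (f : α → β) (a : Fin n → β)
    (h : ∀ k, (s.filter (fun x => f x < a k)).card ≤ k) :
    ∑ k, a k ≤ ∑ x ∈ s, f x := by
  set e : Fin n ≃ s := (s.equivFinOfCardEq hs).symm
  set σ := Tuple.sort (fun k => f (e k))
  have hmono : Monotone (fun k => f (e (σ k))) := Tuple.monotone_sort (fun k => f (e k))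
  have hle : ∀ k, a k ≤ f (e (σ k)) := by
    intro k
    by_contra! hlt
    have hcard : (Finset.Iic k).card ≤ (s.filter (fun x => f x < a k)).card := by
      refine Finset.card_le_card_of_injOn (fun j => (e (σ j) : α)) ?_ ?_
      · intro j hj
        simp only [Finset.coe_Iic, Set.mem_Iic, Finset.coe_filter, Set.mem_ofPred_eq] at hj ⊢
        exact ⟨(e (σ j)).2, (hmono hj).trans_lt hlt⟩
      · intro i _ j _ hij
        exact σ.injective (e.injective (Subtype.ext hij))
    have := h k
    rw [Fin.card_Iic] at hcard
    omega
  calc ∑ k, a k ≤ ∑ k, f (e (σ k)) := Finset.sum_le_sum fun k _ => hle k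
    _ = ∑ x : s, f x := (σ.trans e).sum_comp (fun x : s => f x)
    _ = ∑ x ∈ s, f x := Finset.sum_coe_sort s f

theorem linearIndependent_of_notMem_span_image_Iio {ι K V : Type*} [LinearOrder ι] [Fintype ι]
    [DivisionRing K] [AddCommGroup V] [Module K V] {v : ι → V}
    (hv : ∀ i, v i ∉ span K (v '' Set.Iio i)) : LinearIndependent K v := by
  suffices ∀ s : Finset ι, LinearIndepOn K v s by
    exact linearIndepOn_univ_iff.1 (by simpa using this Finset.univ)
  intro s
  induction s using Finset.induction_on_max with
  | empty => simp
  | insert a s hlt ih =>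
    have has : a ∉ (s : Set ι) := fun ha => (hlt a ha).false
    rw [Finset.coe_insert, linearIndepOn_insert has]
    exact ⟨ih, fun hmem => hv a (span_mono (Set.image_mono fun x hx => hlt x hx) hmem)⟩

theorem Submodule.mkQ_mem_span_image_iff {R M : Type*} [Ring R] [AddCommGroup M] [Module R M]
    (P : Submodule R M) (S : Set M) (x : M) :
    P.mkQ x ∈ span R (P.mkQ '' S) ↔ ∃ z ∈ span R S, x - z ∈ P := by
  rw [span_image, mem_map]
  refine exists_congr fun z => and_congr_right fun _ => ?_
  rw [mkQ_apply, mkQ_apply, Quotient.eq, ← neg_mem_iff, neg_sub]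

theorem LinearMap.exists_ne_zero_notMem_of_map_sum_notMem {ι R M N : Type*} [Fintype ι]
    [Semiring R] [AddCommMonoid M] [Module R M] [AddCommMonoid N] [Module R N]
    (f : M →ₗ[R] N) (W : Submodule R N) (c : ι → R) (m : ι → M)
    (h : f (∑ i, c i • m i) ∉ W) : ∃ i, c i ≠ 0 ∧ f (m i) ∉ W := by
  by_contra! hall
  refine h (map_sum f _ _ ▸ W.sum_mem fun i _ => ?_)
  rw [map_smul]
  rcases eq_or_ne (c i) 0 with hi | hi
  · rw [hi, zero_smul]
    exact W.zero_mem
  · exact W.smul_mem _ (hall i hi)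

theorem LinearIndepOn.card_filter_mem_le_finrank {ι K N : Type*} [DivisionRing K]
    [AddCommGroup N] [Module K N] {v : ι → N} {s : Finset ι} (hv : LinearIndepOn K v s)
    (W : Submodule K N) [FiniteDimensional K W] :
    (s.filter (fun x => v x ∈ W)).card ≤ Module.finrank K W := by
  have hT : LinearIndepOn K v (s.filter (fun x => v x ∈ W) : Set ι) :=
    hv.mono (Finset.coe_subset.2 (Finset.filter_subset _ _))
  have hW : LinearIndependent K
      (fun x : (s.filter (fun x => v x ∈ W) : Set ι) => (⟨v x, (Finset.mem_filter.1 x.2).2⟩ : W)) :=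
    LinearIndependent.of_comp W.subtype hT
  simpa using hW.fintype_card_le_finrank

theorem finrank_span_image_Iio_le {K N : Type*} [DivisionRing K] [AddCommGroup N] [Module K N]
    {n : ℕ} (v : Fin n → N) (k : Fin n) :
    Module.finrank K (Submodule.span K (v '' Set.Iio k)) ≤ k := by
  rw [← Finset.coe_Iio, ← Finset.coe_image]
  calc _ ≤ ((Finset.Iio k).image v).card := finrank_span_finset_le_card _
    _ ≤ (Finset.Iio k).card := Finset.card_image_le
    _ = k := Fin.card_Iio k

namespace PaperMCB

variable {V : Type*} [Fintype V]

section CycleBasis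

variable (G : SimpleGraph V) {ι : Type*} [Fintype ι] {m : ι → (G.edgeSet → ZMod 2)}

theorem setWeight_image (w : Sym2 V → ℝ) (hm : Injective m) :
    setWeight G w (Finset.image m Finset.univ) = ∑ i, cycleWeight G w (m i) :=
  Finset.sum_image fun _ _ _ _ h => hm h

variable [DecidableEq V]

theorem isCycleBasis_image_iff (hm : Injective m) :
    IsCycleBasis G (Finset.image m Finset.univ) ↔
      LinearIndependent (ZMod 2) m ∧ span (ZMod 2) (Set.range m) = cycleSpace G := by
  rw [IsCycleBasis, Finset.coe_image, Finset.coe_univ, Set.image_univ]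
  exact and_congr_left' (linearIndepOn_id_range_iff hm)

theorem IsMinCycleBasis.cycleWeight_le_of_coeff_ne_zero {w : Sym2 V → ℝ} [DecidableEq ι]
    (hm : Injective m) (hmin : IsMinCycleBasis G w (Finset.image m Finset.univ))
    (c : ι → ZMod 2) {s : ι} (hs : c s ≠ 0) :
    cycleWeight G w (m s) ≤ cycleWeight G w (∑ i, c i • m i) := by
  obtain ⟨hli, hspan⟩ := (isCycleBasis_image_iff G hm).1 hmin.1
  set z := ∑ i, c i • m i
  have hli' : LinearIndependent (ZMod 2) (update m s z) :=
    hli.update s z ⟨1, one_mem _, Finsupp.equivFunOnFinite.symm c,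
      mem_nonZeroDivisors_of_ne_zero hs, by simp [z, Finsupp.linearCombination_apply, Finsupp.sum_fintype]⟩
  have hspan' : span (ZMod 2) (Set.range (update m s z)) = cycleSpace G := by
    rw [← hspan]
    refine eq_of_le_of_finrank_eq (span_le.2 (Set.range_subset_iff.2 fun i => ?_))
      (by rw [finrank_span_eq_card hli', finrank_span_eq_card hli])
    rcases eq_or_ne i s with rfl | hi
    · rw [update_self]
      exact sum_mem fun j _ => smul_mem _ _ (subset_span (Set.mem_range_self j))
    · rw [update_of_ne hi]
      exact subset_span (Set.mem_range_self i)
  have hle := hmin.2 _ ((isCycleBasis_image_iff G hli'.injective).2 ⟨hli', hspan'⟩)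
  rw [setWeight_image G w hm, setWeight_image G w hli'.injective] at hle
  have hupdate : ∑ i, cycleWeight G w (update m s z i)
      = cycleWeight G w z + ∑ i ∈ Finset.univ.erase s, cycleWeight G w (m i) := by
    simp_rw [apply_update (fun _ => cycleWeight G w)]
    rw [Finset.sum_update_of_mem (Finset.mem_univ s), Finset.sdiff_singleton_eq_erase]
  rw [hupdate, ← Finset.add_sum_erase _ _ (Finset.mem_univ s)] at hle
  linarith

end CycleBasis

variable [DecidableEq V]

section Homology

variable (K : SComplex V)

theorem IsHomologyBasis.card_eq {H : Finset (K.G.edgeSet → ZMod 2)} (hH : IsHomologyBasis K H) :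
    H.card = Module.finrank (ZMod 2) (homologySpace K) := by
  have hrank := finrank_span_eq_card hH.2.1
  rw [← Set.image_eq_range, hH.2.2] at hrank
  simpa using hrank.symm

theorem isHomologyBasis_image_of_linearIndependent {g : ℕ}
    (hg : g = Module.finrank (ZMod 2) (homologySpace K)) {D : Fin g → (K.G.edgeSet → ZMod 2)}
    (hD : ∀ k, D k ∈ cycleSpace K.G)
    (hli : LinearIndependent (ZMod 2) ((boundarySpace K).mkQ ∘ D)) :
    IsHomologyBasis K (Finset.image D Finset.univ) := by
  have hDinj : Injective D := hli.injective.of_comp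
  rw [IsHomologyBasis, Finset.coe_image, Finset.coe_univ, Set.image_univ, ← Set.range_comp]
  refine ⟨by simpa using hD, (linearIndepOn_range_iff hDinj _).2 hli, ?_⟩
  refine eq_of_le_of_finrank_le (span_le.2 (Set.range_subset_iff.2 fun k => ⟨D k, hD k, rfl⟩)) ?_
  rw [finrank_span_eq_card hli, Fintype.card_fin, hg]

theorem isLeast_greedy_index {p g : ℕ} (C : Fin p → (K.G.edgeSet → ZMod 2))
    (hCnon : ∀ i, C i ∉ boundarySpace K) (idx : Fin g → Fin p)
    (h0 : ∀ hg : 0 < g, (idx ⟨0, hg⟩ : ℕ) = 0)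
    (hgreedy : ∀ k : Fin g, 0 < (k : ℕ) →
      IsLeast {i : Fin p |
          ¬ ∃ z ∈ span (ZMod 2) (C '' (idx '' {j : Fin g | j < k})), Homologous K (C i) z}
        (idx k))
    (k : Fin g) :
    IsLeast {i | (boundarySpace K).mkQ (C i) ∉
        span (ZMod 2) ((fun j => (boundarySpace K).mkQ (C (idx j))) '' Set.Iio k)} (idx k) := by
  rcases Nat.eq_zero_or_pos k with hk | hk
  · have hIio : Set.Iio k = ∅ :=
      Set.eq_empty_of_forall_notMem fun j hj => Nat.not_lt_zero j (hk ▸ Fin.lt_def.1 hj)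
    rw [hIio, Set.image_empty, span_empty]
    refine ⟨fun h => hCnon _ ((Quotient.mk_eq_zero _).1 ((mem_bot _).1 h)), fun i _ => ?_⟩
    rw [Fin.le_def, show k = ⟨0, k.pos⟩ from Fin.ext hk, h0 k.pos]
    exact Nat.zero_le _
  · convert hgreedy k hk using 3 with i
    rw [show Set.Iio k = {j | j < k} from rfl, ← Set.image_image (boundarySpace K).mkQ,
      ← Set.image_image C, Submodule.mkQ_mem_span_image_iff]
    rfl

theorem cycleWeight_le_of_mkQ_notMem {w : Sym2 V → ℝ} {q p : ℕ}
    {B : Fin q → (K.G.edgeSet → ZMod 2)} {C : Fin p → (K.G.edgeSet → ZMod 2)}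
    (hMinj : Injective (Sum.elim B C))
    (hMmin : IsMinCycleBasis K.G w (Finset.image (Sum.elim B C) Finset.univ))
    (hBnull : ∀ j, B j ∈ boundarySpace K) (hCsort : Monotone fun i => cycleWeight K.G w (C i))
    {W : Submodule (ZMod 2) ((K.G.edgeSet → ZMod 2) ⧸ boundarySpace K)} {i₀ : Fin p}
    (hi₀ : i₀ ∈ lowerBounds {i | (boundarySpace K).mkQ (C i) ∉ W})
    {z : K.G.edgeSet → ZMod 2} (hz : z ∈ cycleSpace K.G) (hzW : (boundarySpace K).mkQ z ∉ W) :
    cycleWeight K.G w (C i₀) ≤ cycleWeight K.G w z := by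
  have hspan := ((isCycleBasis_image_iff K.G hMinj).1 hMmin.1).2
  obtain ⟨c, rfl⟩ := (mem_span_range_iff_exists_fun (ZMod 2)).1 (hspan.symm ▸ hz)
  obtain ⟨i | i, hci, hiW⟩ := LinearMap.exists_ne_zero_notMem_of_map_sum_notMem _ W c _ hzW
  · refine absurd ?_ hiW
    rw [Sum.elim_inl, mkQ_apply, (Quotient.mk_eq_zero _).2 (hBnull i)]
    exact W.zero_mem
  · exact (hCsort (hi₀ hiW)).trans (hMmin.cycleWeight_le_of_coeff_ne_zero K.G hMinj c hci)

end Homology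

theorem greedy_subset_is_min_homology_basis_general (K : SComplex V)
    (w : Sym2 V → ℝ)
    {q p : ℕ} (B : Fin q → (K.G.edgeSet → ZMod 2)) (C : Fin p → (K.G.edgeSet → ZMod 2))
    (hMinj : Function.Injective (Sum.elim B C))
    (hMmin : IsMinCycleBasis K.G w (Finset.image (Sum.elim B C) Finset.univ))
    (hBnull : ∀ j, B j ∈ boundarySpace K)
    (hCnon : ∀ i, C i ∉ boundarySpace K)
    (hCsort : ∀ i j : Fin p, i ≤ j → cycleWeight K.G w (C i) ≤ cycleWeight K.G w (C j))
    {g : ℕ} (hgdim : g = Module.finrank (ZMod 2) (homologySpace K))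
    (idx : Fin g → Fin p)
    (h0 : ∀ hg : 0 < g, (idx ⟨0, hg⟩ : ℕ) = 0)
    (hgreedy : ∀ k : Fin g, 0 < (k : ℕ) →
      IsLeast {i : Fin p |
          ¬ ∃ z ∈ Submodule.span (ZMod 2) (C '' (idx '' {j : Fin g | j < k})),
            Homologous K (C i) z}
        (idx k)) :
    IsMinHomologyBasis K w (Finset.image (fun k => C (idx k)) Finset.univ) := by
  set π := (boundarySpace K).mkQ
  set W : Fin g → Submodule (ZMod 2) _ := fun k =>
    span (ZMod 2) ((fun j => π (C (idx j))) '' Set.Iio k)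
  have hleast : ∀ k, IsLeast {i | π (C i) ∉ W k} (idx k) :=
    isLeast_greedy_index K C hCnon idx h0 hgreedy
  have hli : LinearIndependent (ZMod 2) fun k => π (C (idx k)) :=
    linearIndependent_of_notMem_span_image_Iio fun k => (hleast k).1
  have hcyc : ∀ i, C i ∈ cycleSpace K.G := fun i =>
    ((isCycleBasis_image_iff K.G hMinj).1 hMmin.1).2 ▸ subset_span ⟨Sum.inr i, rfl⟩
  refine ⟨isHomologyBasis_image_of_linearIndependent K hgdim (fun k => hcyc _) hli, fun H hH => ?_⟩
  rw [setWeight_image K.G w hli.injective.of_comp]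
  refine Finset.sum_le_sum_of_card_filter_lt_le (hH.card_eq K ▸ hgdim.symm) _ _ fun k => ?_
  calc (H.filter fun z => cycleWeight K.G w z < cycleWeight K.G w (C (idx k))).card
      ≤ (H.filter fun z => π z ∈ W k).card := by
        refine Finset.card_le_card (Finset.monotone_filter_right _ fun z hz hlt => ?_)
        by_contra hzW
        exact (cycleWeight_le_of_mkQ_notMem K hMinj hMmin hBnull hCsort (hleast k).2
          (hH.1 z hz) hzW).not_gt hlt
    _ ≤ Module.finrank (ZMod 2) (W k) := LinearIndepOn.card_filter_mem_le_finrank hH.2.1 _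
    _ ≤ k := finrank_span_image_Iio_le _ k

/-- The greedily chosen non-bounding elements of a minimum cycle basis form a minimum
homology basis. -/
theorem greedy_subset_is_min_homology_basis (K : SComplex V) (hK : K.G.Connected)
    (w : Sym2 V → ℝ) (hw : ∀ e, 0 ≤ w e)
    {q p : ℕ} (B : Fin q → (K.G.edgeSet → ZMod 2)) (C : Fin p → (K.G.edgeSet → ZMod 2))
    (hMinj : Function.Injective (Sum.elim B C))
    (hMmin : IsMinCycleBasis K.G w (Finset.image (Sum.elim B C) Finset.univ))
    (hBnull : ∀ j, B j ∈ boundarySpace K)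
    (hCnon : ∀ i, C i ∉ boundarySpace K)
    (hBsort : ∀ i j : Fin q, i ≤ j → cycleWeight K.G w (B i) ≤ cycleWeight K.G w (B j))
    (hCsort : ∀ i j : Fin p, i ≤ j → cycleWeight K.G w (C i) ≤ cycleWeight K.G w (C j))
    {g : ℕ} (hgdim : g = Module.finrank (ZMod 2) (homologySpace K))
    (idx : Fin g → Fin p)
    (h0 : ∀ hg : 0 < g, (idx ⟨0, hg⟩ : ℕ) = 0)
    (hgreedy : ∀ k : Fin g, 0 < (k : ℕ) →
      IsLeast {i : Fin p |
          ¬ ∃ z ∈ Submodule.span (ZMod 2) (C '' (idx '' {j : Fin g | j < k})),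
            Homologous K (C i) z}
        (idx k)) :
    IsMinHomologyBasis K w (Finset.image (fun k => C (idx k)) Finset.univ) :=
  greedy_subset_is_min_homology_basis_general K w B C hMinj hMmin hBnull hCnon hCsort hgdim idx h0
    hgreedy

end PaperMCB
end
end
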